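/- arXiv:1710.06011 — 3 statements merged into one kernel-verified Lean document; each statement's English description precedes it below -/
import Mathlib

section
/- Let Q be the subalgebra of Mat_X(ℂ) generated by L, F, R, and let T be the subalgebra generated by A and {E*_i}_{i=0}^D. Then Q·M* = T = M*·Q, where M* is the span of {E*_i}_{i=0}^D. -/
open Matrix BigOperators

noncomputable section

variable {X : Type*} [Fintype X] [DecidableEq X]

/-- The adjacency matrix of a graph, over ℂ. -/
def adjMat (G : SimpleGraph X) [DecidableRel G.Adj] : Matrix X X ℂ :=
  Matrix.of fun y z => if G.Adj y z then 1 else 0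

/-- The dual idempotent `E*_i`: diagonal 0-1 matrix projecting onto
vertices at distance `i` from `x` (zero for `i` outside the distance range). -/
def Estar (G : SimpleGraph X) (x : X) (i : ℤ) : Matrix X X ℂ :=
  Matrix.diagonal fun y => if (G.dist x y : ℤ) = i then 1 else 0

/-- The lowering matrix `L = Σ_{i=1}^D E*_{i-1} A E*_i`. -/
def lowerM (G : SimpleGraph X) [DecidableRel G.Adj] (x : X) (D : ℕ) : Matrix X X ℂ :=
  ∑ i ∈ Finset.Icc 1 D, Estar G x ((i : ℤ) - 1) * adjMat G * Estar G x i

/-- The flat matrix `F = Σ_{i=0}^D E*_i A E*_i`. -/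
def flatM (G : SimpleGraph X) [DecidableRel G.Adj] (x : X) (D : ℕ) : Matrix X X ℂ :=
  ∑ i ∈ Finset.range (D + 1), Estar G x i * adjMat G * Estar G x i

/-- The raising matrix `R = Σ_{i=0}^{D-1} E*_{i+1} A E*_i`. -/
def raiseM (G : SimpleGraph X) [DecidableRel G.Adj] (x : X) (D : ℕ) : Matrix X X ℂ :=
  ∑ i ∈ Finset.range D, Estar G x ((i : ℤ) + 1) * adjMat G * Estar G x i

/-- The subconstituent (Terwilliger) algebra `T`, generated by `A` and the `E*_i`. -/
def Talg (G : SimpleGraph X) [DecidableRel G.Adj] (x : X) (D : ℕ) :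
    Subalgebra ℂ (Matrix X X ℂ) :=
  Algebra.adjoin ℂ (insert (adjMat G) (Estar G x '' Set.Icc (0 : ℤ) (D : ℤ)))

/-- The quantum adjacency algebra `Q`, generated by `L, F, R`. -/
def Qalg (G : SimpleGraph X) [DecidableRel G.Adj] (x : X) (D : ℕ) :
    Subalgebra ℂ (Matrix X X ℂ) :=
  Algebra.adjoin ℂ {lowerM G x D, flatM G x D, raiseM G x D}

/-- The dual adjacency algebra `M*`, the span of the `E*_i`. -/
def Mstar (G : SimpleGraph X) (x : X) (D : ℕ) : Submodule ℂ (Matrix X X ℂ) :=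
  Submodule.span ℂ (Estar G x '' Set.Icc (0 : ℤ) (D : ℤ))

/-- The graded component `T_n = Σ_i E*_{i+n} T E*_i`. -/
def Tgraded (G : SimpleGraph X) [DecidableRel G.Adj] (x : X) (D : ℕ) (n : ℤ) :
    Submodule ℂ (Matrix X X ℂ) :=
  Submodule.span ℂ
    {M | ∃ i : ℤ, ∃ S ∈ Talg G x D, M = Estar G x (i + n) * S * Estar G x i}

/-- The graded component `Q_n = Q ∩ T_n`. -/
def Qgraded (G : SimpleGraph X) [DecidableRel G.Adj] (x : X) (D : ℕ) (n : ℤ) :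
    Submodule ℂ (Matrix X X ℂ) :=
  (Subalgebra.toSubmodule (Qalg G x D)) ⊓ Tgraded G x D n

/-- `W` is an irreducible module for the algebra `A₀ ⊆ Mat_X(ℂ)` (acting on `V = ℂ^X`
by matrix-vector multiplication). -/
def IsIrredMod (A₀ : Subalgebra ℂ (Matrix X X ℂ)) (W : Submodule ℂ (X → ℂ)) : Prop :=
  (∀ S ∈ A₀, ∀ w ∈ W, S.mulVec w ∈ W) ∧ W ≠ ⊥ ∧
    ∀ W' : Submodule ℂ (X → ℂ), W' ≤ W →
      (∀ S ∈ A₀, ∀ w ∈ W', S.mulVec w ∈ W') → W' = ⊥ ∨ W' = W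

/-- The subspace `E*_i W`. -/
def Emap (G : SimpleGraph X) (x : X) (i : ℤ) (W : Submodule ℂ (X → ℂ)) :
    Submodule ℂ (X → ℂ) :=
  W.map (Estar G x i).mulVecLin

/-- The subspace `P · W` spanned by all `S w`, `S ∈ P`, `w ∈ W`. -/
def actSp (P : Submodule ℂ (Matrix X X ℂ)) (W : Submodule ℂ (X → ℂ)) :
    Submodule ℂ (X → ℂ) :=
  Submodule.span ℂ {v | ∃ S ∈ P, ∃ w ∈ W, v = S.mulVec w}

/-- The statement: `W` has endpoint `r` and diameter `d`, i.e. `E*_i W ≠ 0`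
iff `r ≤ i ≤ r + d`. -/
def HasEndpointDiam (G : SimpleGraph X) (x : X) (W : Submodule ℂ (X → ℂ))
    (r d : ℕ) : Prop :=
  ∀ i : ℤ, Emap G x i W ≠ ⊥ ↔ ((r : ℤ) ≤ i ∧ i ≤ (r : ℤ) + (d : ℤ))

/-- `σ` restricts to an isomorphism of `Q`-modules from `U` to `W`. -/
def IsQIso (G : SimpleGraph X) [DecidableRel G.Adj] (x : X) (D : ℕ)
    (U W : Submodule ℂ (X → ℂ)) (σ : (X → ℂ) →ₗ[ℂ] (X → ℂ)) : Prop :=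
  U.map σ = W ∧ (∀ u ∈ U, σ u = 0 → u = 0) ∧
    ∀ S ∈ Qalg G x D, ∀ u ∈ U, σ (S.mulVec u) = S.mulVec (σ u)

/-- `σ` restricts to an isomorphism of `T`-modules from `U` to `W`. -/
def IsTIso (G : SimpleGraph X) [DecidableRel G.Adj] (x : X) (D : ℕ)
    (U W : Submodule ℂ (X → ℂ)) (σ : (X → ℂ) →ₗ[ℂ] (X → ℂ)) : Prop :=
  U.map σ = W ∧ (∀ u ∈ U, σ u = 0 → u = 0) ∧
    ∀ S ∈ Talg G x D, ∀ u ∈ U, σ (S.mulVec u) = S.mulVec (σ u)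

/-- `σ` restricts to a quasi-isomorphism of `T`-modules from `U` to `W`,
with endpoint shift `n`. -/
def IsQuasiIso (G : SimpleGraph X) [DecidableRel G.Adj] (x : X) (D : ℕ)
    (U W : Submodule ℂ (X → ℂ)) (σ : (X → ℂ) →ₗ[ℂ] (X → ℂ)) (n : ℤ) : Prop :=
  U.map σ = W ∧ (∀ u ∈ U, σ u = 0 → u = 0) ∧
    (∀ u ∈ U, σ ((lowerM G x D).mulVec u) = (lowerM G x D).mulVec (σ u)) ∧
    (∀ u ∈ U, σ ((flatM G x D).mulVec u) = (flatM G x D).mulVec (σ u)) ∧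
    (∀ u ∈ U, σ ((raiseM G x D).mulVec u) = (raiseM G x D).mulVec (σ u)) ∧
    ∀ i : ℤ, ∀ u ∈ U, σ ((Estar G x i).mulVec u) = (Estar G x (i + n)).mulVec (σ u)

end

/-!
`Q M* ⊆ T` is clear. Each of `L, F, R` shifts the distance grading by a fixed amount
(`E*_j L = L E*_(j+1)`, `E*_j F = F E*_j`, `E*_j R = R E*_(j-1)`), so each generator of `Q`
normalizes `M*` and therefore `M* Q = Q M*`. Since the `E*_i` are orthogonal idempotents summing
to `1`, `M*` is a unital subalgebra, so `Q M*` is closed under multiplication; it contains every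
`E*_i` and `A = L + F + R`, hence all of `T`.
-/

namespace Submodule

variable {R A : Type*} [CommSemiring R] [Semiring A] [Algebra R A]

theorem mul_adjoin_le_adjoin_mul {s : Set A} {M : Submodule R A}
    (h : ∀ g ∈ s, M * span R {g} ≤ span R {g} * M) :
    M * Subalgebra.toSubmodule (Algebra.adjoin R s)
      ≤ Subalgebra.toSubmodule (Algebra.adjoin R s) * M := by
  set Q := Subalgebra.toSubmodule (Algebra.adjoin R s)
  suffices key : ∀ q ∈ Algebra.adjoin R s, M * span R {q} ≤ Q * M by
    rw [mul_le]
    exact fun m hm q hq => key q hq (mul_mem_mul hm (mem_span_singleton_self q))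
  intro q hq
  induction hq using Algebra.adjoin_induction with
  | mem g hg =>
    refine (h g hg).trans (mul_le_mul_left ?_ M)
    exact span_le.mpr (Set.singleton_subset_iff.mpr (Algebra.subset_adjoin hg))
  | algebraMap r =>
    calc M * span R {algebraMap R A r} ≤ M * 1 := mul_le_mul_right (span_le.mpr (by simp)) M
      _ = 1 * M := by rw [mul_one, one_mul]
      _ ≤ Q * M := mul_le_mul_left (one_le.mpr (Algebra.adjoin R s).one_mem) M
  | add a b _ _ ha hb =>
    calc M * span R {a + b} ≤ M * (span R {a} ⊔ span R {b}) :=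
          mul_le_mul_right (span_le.mpr (Set.singleton_subset_iff.mpr
            (add_mem_sup (mem_span_singleton_self a) (mem_span_singleton_self b)))) M
      _ = M * span R {a} ⊔ M * span R {b} := mul_sup _ _ _
      _ ≤ Q * M := sup_le ha hb
  | mul a b _ _ ha hb =>
    calc M * span R {a * b} = M * span R {a} * span R {b} := by
          rw [mul_assoc, span_mul_span, Set.singleton_mul_singleton]
      _ ≤ Q * M * span R {b} := mul_le_mul_left ha _
      _ = Q * (M * span R {b}) := mul_assoc _ _ _
      _ ≤ Q * (Q * M) := mul_le_mul_right hb Q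
      _ = Q * M := by rw [← mul_assoc, (Algebra.adjoin R s).isIdempotentElem_toSubmodule.eq]

theorem adjoin_mul_le_mul_adjoin {s : Set A} {M : Submodule R A}
    (h : ∀ g ∈ s, span R {g} * M ≤ M * span R {g}) :
    Subalgebra.toSubmodule (Algebra.adjoin R s) * M
      ≤ M * Subalgebra.toSubmodule (Algebra.adjoin R s) := by
  set Q := Subalgebra.toSubmodule (Algebra.adjoin R s)
  suffices key : ∀ q ∈ Algebra.adjoin R s, span R {q} * M ≤ M * Q by
    rw [mul_le]
    exact fun q hq m hm => key q hq (mul_mem_mul (mem_span_singleton_self q) hm)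
  intro q hq
  induction hq using Algebra.adjoin_induction with
  | mem g hg =>
    refine (h g hg).trans (mul_le_mul_right ?_ M)
    exact span_le.mpr (Set.singleton_subset_iff.mpr (Algebra.subset_adjoin hg))
  | algebraMap r =>
    calc span R {algebraMap R A r} * M ≤ 1 * M := mul_le_mul_left (span_le.mpr (by simp)) M
      _ = M * 1 := by rw [mul_one, one_mul]
      _ ≤ M * Q := mul_le_mul_right (one_le.mpr (Algebra.adjoin R s).one_mem) M
  | add a b _ _ ha hb =>
    calc span R {a + b} * M ≤ (span R {a} ⊔ span R {b}) * M :=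
          mul_le_mul_left (span_le.mpr (Set.singleton_subset_iff.mpr
            (add_mem_sup (mem_span_singleton_self a) (mem_span_singleton_self b)))) M
      _ = span R {a} * M ⊔ span R {b} * M := sup_mul _ _ _
      _ ≤ M * Q := sup_le ha hb
  | mul a b _ _ ha hb =>
    calc span R {a * b} * M = span R {a} * (span R {b} * M) := by
          rw [← mul_assoc, span_mul_span, Set.singleton_mul_singleton]
      _ ≤ span R {a} * (M * Q) := mul_le_mul_right hb _
      _ = span R {a} * M * Q := (mul_assoc _ _ _).symm
      _ ≤ M * Q * Q := mul_le_mul_left ha Q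
      _ = M * Q := by rw [mul_assoc, (Algebra.adjoin R s).isIdempotentElem_toSubmodule.eq]

theorem toSubmodule_adjoin_le_mul {Q : Subalgebra R A} {M : Submodule R A} {t : Set A}
    (hM_one : (1 : A) ∈ M) (hM_mul : M * M ≤ M)
    (hcomm : M * Subalgebra.toSubmodule Q ≤ Subalgebra.toSubmodule Q * M)
    (ht : t ⊆ Subalgebra.toSubmodule Q * M) :
    Subalgebra.toSubmodule (Algebra.adjoin R t) ≤ Subalgebra.toSubmodule Q * M := by
  set P := Subalgebra.toSubmodule Q
  have hmul : P * M * (P * M) ≤ P * M :=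
    calc P * M * (P * M) = P * (M * P) * M := by simp only [mul_assoc]
      _ ≤ P * (P * M) * M := mul_le_mul_left (mul_le_mul_right hcomm P) M
      _ = P * P * (M * M) := by simp only [mul_assoc]
      _ ≤ P * M := by rw [Q.isIdempotentElem_toSubmodule.eq]; exact mul_le_mul_right hM_mul P
  have hone : (1 : A) ∈ P * M := by simpa using mul_mem_mul Q.one_mem hM_one
  exact Algebra.adjoin_le (S := (P * M).toSubalgebra hone
    fun a b ha hb => hmul (mul_mem_mul ha hb)) ht

end Submodule

namespace Terwilliger

open Submodule

section

variable {X : Type*} [DecidableEq X] (G : SimpleGraph X) (x : X) {D : ℕ}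

lemma Estar_eq_zero (hD : ∀ y, G.dist x y ≤ D) {i : ℤ} (hi : i ∉ Set.Icc 0 (D : ℤ)) :
    Estar G x i = 0 := by
  rw [Estar, ← diagonal_zero]
  congr 1
  funext y
  rw [if_neg]
  rintro rfl
  exact hi ⟨Int.natCast_nonneg _, by exact_mod_cast hD y⟩

lemma Estar_mem_Mstar (hD : ∀ y, G.dist x y ≤ D) (i : ℤ) : Estar G x i ∈ Mstar G x D := by
  by_cases hi : i ∈ Set.Icc 0 (D : ℤ)
  · exact subset_span ⟨i, hi, rfl⟩
  · rw [Estar_eq_zero G x hD hi]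
    exact zero_mem _

lemma sum_Estar (hD : ∀ y, G.dist x y ≤ D) :
    ∑ i ∈ Finset.range (D + 1), Estar G x i = 1 := by
  ext y z
  rcases eq_or_ne y z with rfl | h
  · simp [Estar, Matrix.sum_apply, Nat.lt_succ_of_le (hD y)]
  · simp [h, Estar, Matrix.sum_apply]

lemma one_mem_Mstar (hD : ∀ y, G.dist x y ≤ D) : (1 : Matrix X X ℂ) ∈ Mstar G x D := by
  rw [← sum_Estar G x hD]
  exact sum_mem fun i _ => Estar_mem_Mstar G x hD i

end

variable {X : Type*} [Fintype X] [DecidableEq X] (G : SimpleGraph X) (x : X) {D : ℕ}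

lemma Estar_mul_Estar (i j : ℤ) :
    Estar G x i * Estar G x j = if i = j then Estar G x i else 0 := by
  rw [Estar, Estar, diagonal_mul_diagonal]
  split_ifs with h
  · subst h
    congr 1
    funext y
    split_ifs <;> simp
  · rw [← diagonal_zero]
    congr 1
    funext y
    split_ifs <;> simp_all

lemma Mstar_mul_Mstar_le : Mstar G x D * Mstar G x D ≤ Mstar G x D := by
  rw [Mstar, span_mul_span, span_le]
  rintro _ ⟨_, ⟨i, hi, rfl⟩, _, ⟨j, -, rfl⟩, rfl⟩
  dsimp only
  rw [Estar_mul_Estar]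
  split_ifs
  · exact subset_span ⟨i, hi, rfl⟩
  · exact zero_mem _

/-- Both sides vanish unless `j = a`. -/
lemma Estar_mul_sandwich (j a b : ℤ) (N : Matrix X X ℂ) :
    Estar G x j * (Estar G x a * N * Estar G x b)
      = Estar G x a * N * Estar G x b * Estar G x (j + (b - a)) := by
  rw [← mul_assoc, ← mul_assoc, mul_assoc (Estar G x a * N), Estar_mul_Estar, Estar_mul_Estar]
  by_cases h : j = a
  · rw [if_pos h, if_pos (by omega), h]
  · rw [if_neg h, if_neg (by omega)]
    simp

lemma sum_sandwich_apply (s : Finset ℕ) (f : ℕ → ℤ) (N : Matrix X X ℂ) (y z : X) :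
    (∑ i ∈ s, Estar G x (f i) * N * Estar G x i) y z
      = if G.dist x z ∈ s ∧ (G.dist x y : ℤ) = f (G.dist x z) then N y z else 0 := by
  simp only [Estar, Matrix.sum_apply, mul_diagonal, diagonal_mul, Nat.cast_inj, mul_ite, mul_one,
    mul_zero, Finset.sum_ite_eq]
  split_ifs <;> simp_all

lemma Mstar_mul_span_eq (hD : ∀ y, G.dist x y ≤ D) {g : Matrix X X ℂ} {k : ℤ}
    (hg : ∀ j, Estar G x j * g = g * Estar G x (j + k)) :
    Mstar G x D * span ℂ {g} = span ℂ {g} * Mstar G x D := by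
  apply le_antisymm
  · rw [Mstar, span_mul_span, span_le]
    rintro _ ⟨_, ⟨i, -, rfl⟩, _, rfl, rfl⟩
    dsimp only
    rw [hg]
    exact mul_mem_mul (mem_span_singleton_self _) (Estar_mem_Mstar G x hD _)
  · rw [Mstar, span_mul_span, span_le]
    rintro _ ⟨_, rfl, _, ⟨i, -, rfl⟩, rfl⟩
    dsimp only
    rw [show i = i - k + k by ring, ← hg]
    exact mul_mem_mul (Estar_mem_Mstar G x hD _) (mem_span_singleton_self _)

variable [DecidableRel G.Adj]

lemma Estar_mul_lowerM (j : ℤ) :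
    Estar G x j * lowerM G x D = lowerM G x D * Estar G x (j + 1) := by
  simp only [lowerM, Finset.mul_sum, Finset.sum_mul, Estar_mul_sandwich, sub_sub_cancel]

lemma Estar_mul_flatM (j : ℤ) :
    Estar G x j * flatM G x D = flatM G x D * Estar G x j := by
  simp only [flatM, Finset.mul_sum, Finset.sum_mul, Estar_mul_sandwich, sub_self, add_zero]

lemma Estar_mul_raiseM (j : ℤ) :
    Estar G x j * raiseM G x D = raiseM G x D * Estar G x (j - 1) := by
  simp only [raiseM, Finset.mul_sum, Finset.sum_mul, Estar_mul_sandwich, sub_add_cancel_left,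
    ← sub_eq_add_neg]

lemma Mstar_mul_Qalg_eq (hD : ∀ y, G.dist x y ≤ D) :
    Mstar G x D * Subalgebra.toSubmodule (Qalg G x D)
      = Subalgebra.toSubmodule (Qalg G x D) * Mstar G x D := by
  have hspan : ∀ g ∈ ({lowerM G x D, flatM G x D, raiseM G x D} : Set (Matrix X X ℂ)),
      Mstar G x D * span ℂ {g} = span ℂ {g} * Mstar G x D := by
    rintro _ (rfl | rfl | rfl)
    · exact Mstar_mul_span_eq G x hD (Estar_mul_lowerM G x)
    · exact Mstar_mul_span_eq G x hD (k := 0) fun j => by rw [Estar_mul_flatM, add_zero]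
    · exact Mstar_mul_span_eq G x hD (k := -1) fun j => by rw [Estar_mul_raiseM, sub_eq_add_neg]
  exact le_antisymm (mul_adjoin_le_adjoin_mul fun g hg => (hspan g hg).le)
    (adjoin_mul_le_mul_adjoin fun g hg => (hspan g hg).ge)

/-- Adjacent vertices lie at distances from `x` differing by at most one. -/
lemma adjMat_eq_lowerM_add_flatM_add_raiseM (hD : ∀ y, G.dist x y ≤ D) :
    adjMat G = lowerM G x D + flatM G x D + raiseM G x D := by
  ext y z
  simp only [Matrix.add_apply, lowerM, flatM, raiseM, sum_sandwich_apply, Finset.mem_Icc,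
    Finset.mem_range]
  by_cases hyz : G.Adj y z
  · have := hyz.diff_dist_adj (u := x)
    have := hD y
    have := hD z
    simp only [adjMat, of_apply, if_pos hyz]
    split_ifs <;> norm_num <;> omega
  · simp [adjMat, hyz]

lemma adjMat_mem_Qalg (hD : ∀ y, G.dist x y ≤ D) : adjMat G ∈ Qalg G x D := by
  rw [adjMat_eq_lowerM_add_flatM_add_raiseM G x hD]
  exact add_mem (add_mem (Algebra.subset_adjoin (by simp)) (Algebra.subset_adjoin (by simp)))
    (Algebra.subset_adjoin (by simp))

lemma Mstar_le_Talg : Mstar G x D ≤ Subalgebra.toSubmodule (Talg G x D) :=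
  span_le.mpr fun _ hE => Algebra.subset_adjoin (Set.mem_insert_of_mem _ hE)

lemma Qalg_le_Talg (hD : ∀ y, G.dist x y ≤ D) : Qalg G x D ≤ Talg G x D := by
  have hE : ∀ i, Estar G x i ∈ Talg G x D := fun i => Mstar_le_Talg G x (Estar_mem_Mstar G x hD i)
  have hA : adjMat G ∈ Talg G x D := Algebra.subset_adjoin (Set.mem_insert _ _)
  refine Algebra.adjoin_le ?_
  rintro _ (rfl | rfl | rfl) <;>
    exact sum_mem fun i _ => mul_mem (mul_mem (hE _) hA) (hE _)

lemma Qalg_mul_Mstar_le_Talg (hD : ∀ y, G.dist x y ≤ D) :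
    Subalgebra.toSubmodule (Qalg G x D) * Mstar G x D ≤ Subalgebra.toSubmodule (Talg G x D) :=
  calc _ ≤ Subalgebra.toSubmodule (Talg G x D) * Subalgebra.toSubmodule (Talg G x D) :=
        mul_le_mul' (Qalg_le_Talg G x hD) (Mstar_le_Talg G x)
    _ = _ := (Talg G x D).isIdempotentElem_toSubmodule.eq

lemma Talg_le_Qalg_mul_Mstar (hD : ∀ y, G.dist x y ≤ D) :
    Subalgebra.toSubmodule (Talg G x D) ≤ Subalgebra.toSubmodule (Qalg G x D) * Mstar G x D := by
  refine toSubmodule_adjoin_le_mul (one_mem_Mstar G x hD) (Mstar_mul_Mstar_le G x)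
    (Mstar_mul_Qalg_eq G x hD).le ?_
  rintro _ (rfl | ⟨i, -, rfl⟩)
  · simpa using mul_mem_mul (M := Subalgebra.toSubmodule (Qalg G x D)) (adjMat_mem_Qalg G x hD)
      (one_mem_Mstar G x hD)
  · simpa using mul_mem_mul (M := Subalgebra.toSubmodule (Qalg G x D)) (Qalg G x D).one_mem
      (Estar_mem_Mstar G x hD i)

end Terwilliger

theorem stmt6_general {X : Type*} [Fintype X] [DecidableEq X]
    (G : SimpleGraph X) [DecidableRel G.Adj] (x : X) (D : ℕ)
    (hD : ∀ y, G.dist x y ≤ D) :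
    Subalgebra.toSubmodule (Qalg G x D) * Mstar G x D
      = Subalgebra.toSubmodule (Talg G x D) ∧
    Subalgebra.toSubmodule (Talg G x D)
      = Mstar G x D * Subalgebra.toSubmodule (Qalg G x D) := by
  have hQMT := le_antisymm (Terwilliger.Qalg_mul_Mstar_le_Talg G x hD)
    (Terwilliger.Talg_le_Qalg_mul_Mstar G x hD)
  exact ⟨hQMT, hQMT.symm.trans (Terwilliger.Mstar_mul_Qalg_eq G x hD).symm⟩

theorem stmt6 {X : Type*} [Fintype X] [DecidableEq X]
    (G : SimpleGraph X) [DecidableRel G.Adj] (hG : G.Connected) (x : X) (D : ℕ)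
    (hD : ∀ y, G.dist x y ≤ D) (hD2 : ∃ y, G.dist x y = D) :
    Subalgebra.toSubmodule (Qalg G x D) * Mstar G x D
      = Subalgebra.toSubmodule (Talg G x D) ∧
    Subalgebra.toSubmodule (Talg G x D)
      = Mstar G x D * Subalgebra.toSubmodule (Qalg G x D) :=
  stmt6_general G x D hD
end

section
/- For n ∈ ℤ define T_n = Σ_{i ∈ ℤ} E*_{i+n} T E*_i (with E*_i = 0 outside 0 ≤ i ≤ D). Then T = ⊕_{n ∈ ℤ} T_n is a direct sum of vector spaces, and T_n T_m ⊆ T_{n+m} for all n, m ∈ ℤ; that is, {T_n} is a ℤ-grading of T. -/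
open Matrix BigOperators

/-! The distance `∂(x, ·)` grades the vertices, so every matrix `M` splits into blocks according to
the shift `∂(x, y) - ∂(x, z)` of its entries, and `T_n` consists of blocks of shift `n`; this makes
the sum of the `T_n` direct. Since the `E*_i` are orthogonal idempotents with `Σ_i E*_i = 1`, every
`S ∈ T` decomposes as `Σ_{i,j} E*_i S E*_j` with `E*_i S E*_j ∈ T_{i-j}`, and
`(E*_a S E*_b)(E*_c S' E*_d)` vanishes unless `b = c`, in which case it equals
`E*_a (S E*_b S') E*_d`, whose shift is the sum of the two shifts. -/

section ShiftSupported

variable {X R : Type*} [Ring R]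

def shiftSupported (f : X → ℤ) (n : ℤ) : Submodule R (Matrix X X R) where
  carrier := {M | ∀ y z, f y ≠ f z + n → M y z = 0}
  add_mem' hM hN y z h := by simp [hM y z h, hN y z h]
  zero_mem' _ _ _ := rfl
  smul_mem' c _ hM y z h := by simp [hM y z h]

theorem iSupIndep_shiftSupported (f : X → ℤ) : iSupIndep (shiftSupported (R := R) f) := by
  classical
  rw [iSupIndep_iff_finsetSum_eq_zero_imp_eq_zero]
  intro s v hv hsum i hi
  ext y z
  -- only the summand of degree `f y - f z` can contribute to the `(y, z)` entry
  have hvanish : ∀ j ∈ s, j ≠ f y - f z → v j y z = 0 := fun j hj hne =>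
    hv j hj y z (by omega)
  have hentry : ∑ j ∈ s, v j y z = 0 := by
    simpa only [Matrix.sum_apply, Matrix.zero_apply] using congrFun (congrFun hsum y) z
  by_cases hdeg : i = f y - f z
  · subst hdeg
    rwa [Finset.sum_eq_single_of_mem _ hi hvanish] at hentry
  · exact hvanish i hi hdeg

end ShiftSupported

section Subconstituent

variable {X : Type*} [DecidableEq X] (G : SimpleGraph X) (x : X)

theorem Estar_eq_zero_of_forall_ne {j : ℤ} (h : ∀ y, (G.dist x y : ℤ) ≠ j) :
    Estar G x j = 0 := by
  rw [Estar, ← diagonal_zero]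
  congr 1
  funext y
  simp [h y]

theorem sum_Estar {D : ℕ} (hD : ∀ y, G.dist x y ≤ D) :
    ∑ i ∈ Finset.range (D + 1), Estar G x i = 1 := by
  have hmem (y : X) : G.dist x y ∈ Finset.range (D + 1) :=
    Finset.mem_range.2 (Nat.lt_succ_of_le (hD y))
  simp_rw [Estar, ← diagonalAddMonoidHom_apply, ← map_sum, diagonalAddMonoidHom_apply,
    ← diagonal_one]
  congr 1
  funext y
  simp [Finset.sum_apply, hmem y]

variable [Fintype X]

theorem Estar_mul_Estar (i j : ℤ) :
    Estar G x i * Estar G x j = if i = j then Estar G x i else 0 := by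
  split_ifs with h
  · subst h
    rw [Estar, diagonal_mul_diagonal]
    congr 1
    funext y
    split_ifs <;> simp
  · rw [Estar, Estar, diagonal_mul_diagonal, ← diagonal_zero]
    congr 1
    funext y
    split_ifs <;> simp_all

theorem Estar_mul_mul_Estar_apply (i j : ℤ) (S : Matrix X X ℂ) (y z : X) :
    (Estar G x i * S * Estar G x j) y z =
      (if (G.dist x y : ℤ) = i then 1 else 0) * S y z *
        (if (G.dist x z : ℤ) = j then 1 else 0) := by
  simp only [Estar, mul_diagonal, diagonal_mul]

theorem Estar_mul_mul_Estar_mul_Estar_mul_mul_Estar (a b c d : ℤ) (S S' : Matrix X X ℂ) :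
    Estar G x a * S * Estar G x b * (Estar G x c * S' * Estar G x d) =
      if b = c then Estar G x a * (S * Estar G x b * S') * Estar G x d else 0 := by
  calc _ = Estar G x a * S * (Estar G x b * Estar G x c) * S' * Estar G x d := by
        simp only [mul_assoc]
    _ = _ := by
      rw [Estar_mul_Estar]
      split_ifs
      · simp only [mul_assoc]
      · simp

theorem Estar_mul_mul_Estar_mem_shiftSupported (S : Matrix X X ℂ) (i n : ℤ) :
    Estar G x (i + n) * S * Estar G x i ∈ shiftSupported (fun y => (G.dist x y : ℤ)) n := by
  intro y z h
  rw [Estar_mul_mul_Estar_apply]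
  split_ifs with hy hz <;> simp_all

variable [DecidableRel G.Adj] {D : ℕ}

theorem Estar_mem_Talg (hD : ∀ y, G.dist x y ≤ D) (j : ℤ) : Estar G x j ∈ Talg G x D := by
  by_cases hj : 0 ≤ j ∧ j ≤ D
  · exact Algebra.subset_adjoin (Set.mem_insert_of_mem _ ⟨j, hj, rfl⟩)
  · rw [Estar_eq_zero_of_forall_ne G x fun y hy => hj ⟨by omega, by have := hD y; omega⟩]
    exact zero_mem _

theorem Estar_mul_mul_Estar_mem_Tgraded {S : Matrix X X ℂ} (hS : S ∈ Talg G x D) (i j : ℤ) :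
    Estar G x i * S * Estar G x j ∈ Tgraded G x D (i - j) :=
  Submodule.subset_span ⟨j, S, hS, by rw [add_sub_cancel]⟩

theorem Tgraded_le_Talg (hD : ∀ y, G.dist x y ≤ D) (n : ℤ) :
    Tgraded G x D n ≤ Subalgebra.toSubmodule (Talg G x D) := by
  rw [Tgraded, Submodule.span_le]
  rintro _ ⟨i, S, hS, rfl⟩
  exact (Talg G x D).mul_mem ((Talg G x D).mul_mem (Estar_mem_Talg G x hD _) hS)
    (Estar_mem_Talg G x hD _)

theorem Tgraded_le_shiftSupported (n : ℤ) :
    Tgraded G x D n ≤ shiftSupported (fun y => (G.dist x y : ℤ)) n := by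
  rw [Tgraded, Submodule.span_le]
  rintro _ ⟨i, S, -, rfl⟩
  exact Estar_mul_mul_Estar_mem_shiftSupported G x S i n

theorem Talg_le_iSup_Tgraded (hD : ∀ y, G.dist x y ≤ D) :
    Subalgebra.toSubmodule (Talg G x D) ≤ ⨆ n, Tgraded G x D n := by
  intro S hS
  rw [← one_mul S, ← mul_one (1 * S), ← sum_Estar G x hD, Finset.sum_mul, Finset.sum_mul_sum]
  refine Submodule.sum_mem _ fun i _ => Submodule.sum_mem _ fun j _ => ?_
  exact Submodule.mem_iSup_of_mem _ (Estar_mul_mul_Estar_mem_Tgraded G x hS i j)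

theorem Tgraded_mul_Tgraded_le (hD : ∀ y, G.dist x y ≤ D) (n m : ℤ) :
    Tgraded G x D n * Tgraded G x D m ≤ Tgraded G x D (n + m) := by
  rw [Tgraded, Tgraded, Submodule.span_mul_span, Submodule.span_le]
  rintro _ ⟨_, ⟨i, S, hS, rfl⟩, _, ⟨j, S', hS', rfl⟩, rfl⟩
  beta_reduce
  rw [SetLike.mem_coe, Estar_mul_mul_Estar_mul_Estar_mul_mul_Estar]
  split_ifs with hij
  · have hmid : S * Estar G x i * S' ∈ Talg G x D :=
      (Talg G x D).mul_mem ((Talg G x D).mul_mem hS (Estar_mem_Talg G x hD i)) hS'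
    have := Estar_mul_mul_Estar_mem_Tgraded G x hmid (i + n) j
    rwa [show i + n - j = n + m by omega] at this
  · exact zero_mem _

end Subconstituent

theorem stmt8_general {X : Type*} [Fintype X] [DecidableEq X]
    (G : SimpleGraph X) [DecidableRel G.Adj] (x : X) (D : ℕ)
    (hD : ∀ y, G.dist x y ≤ D) :
    (⨆ n : ℤ, Tgraded G x D n) = Subalgebra.toSubmodule (Talg G x D) ∧
    iSupIndep (Tgraded G x D) ∧
    ∀ n m : ℤ, Tgraded G x D n * Tgraded G x D m ≤ Tgraded G x D (n + m) :=
  ⟨le_antisymm (iSup_le (Tgraded_le_Talg G x hD)) (Talg_le_iSup_Tgraded G x hD),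
    (iSupIndep_shiftSupported _).mono (Tgraded_le_shiftSupported G x),
    Tgraded_mul_Tgraded_le G x hD⟩

theorem stmt8 {X : Type*} [Fintype X] [DecidableEq X]
    (G : SimpleGraph X) [DecidableRel G.Adj] (hG : G.Connected) (x : X) (D : ℕ)
    (hD : ∀ y, G.dist x y ≤ D) (hD2 : ∃ y, G.dist x y = D) :
    (⨆ n : ℤ, Tgraded G x D n) = Subalgebra.toSubmodule (Talg G x D) ∧
    iSupIndep (Tgraded G x D) ∧
    ∀ n m : ℤ, Tgraded G x D n * Tgraded G x D m ≤ Tgraded G x D (n + m) :=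
  stmt8_general G x D hD
end

section
/- Let W be an irreducible T-module and let v ∈ W be a nonzero common eigenvector for the dual adjacency algebra M*. Then W = Q·v. -/
open Matrix BigOperators

/-! Since `Q ⊆ T`, the span `Q·v` lies in `W`, and by irreducibility it suffices to show that
`Q·v` is a `T`-module. It is stable under `A = L + F + R`. For the `E*_j`, the generators of `Q`
satisfy the twisted commutation relations `E*_i L = L E*_{i+1}`, `E*_i F = F E*_i` and
`E*_i R = R E*_{i-1}`; hence the vectors `w ∈ Q·v` with `E*_j w ∈ Q·v` for all `j` form a
`Q`-stable subspace, which contains `v` because `v` is an eigenvector of every `E*_j`. -/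

section CyclicSpan

variable {n R : Type*} [Fintype n] [DecidableEq n] [CommRing R]

def cyclicSpan (A : Subalgebra R (Matrix n n R)) (v : n → R) : Submodule R (n → R) :=
  Submodule.span R {w | ∃ S ∈ A, w = S *ᵥ v}

theorem mulVec_mem_of_mem_adjoin {s : Set (Matrix n n R)} {P : Submodule R (n → R)}
    (hs : ∀ g ∈ s, ∀ w ∈ P, g *ᵥ w ∈ P) {S : Matrix n n R}
    (hS : S ∈ Algebra.adjoin R s) : ∀ w ∈ P, S *ᵥ w ∈ P := by
  induction hS using Algebra.adjoin_induction with
  | mem g hg => exact hs g hg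
  | algebraMap c =>
    intro w hw
    rw [Algebra.algebraMap_eq_smul_one, smul_mulVec, one_mulVec]
    exact P.smul_mem c hw
  | add a b _ _ ha hb =>
    intro w hw
    rw [add_mulVec]
    exact add_mem (ha w hw) (hb w hw)
  | mul a b _ _ ha hb =>
    intro w hw
    rw [← mulVec_mulVec]
    exact ha _ (hb w hw)

variable {A : Subalgebra R (Matrix n n R)} {v : n → R}

theorem self_mem_cyclicSpan : v ∈ cyclicSpan A v :=
  Submodule.subset_span ⟨1, one_mem A, (one_mulVec v).symm⟩

theorem mulVec_mem_cyclicSpan {S : Matrix n n R} (hS : S ∈ A) {w : n → R}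
    (hw : w ∈ cyclicSpan A v) : S *ᵥ w ∈ cyclicSpan A v := by
  induction hw using Submodule.span_induction with
  | mem w hw =>
    obtain ⟨S', hS', rfl⟩ := hw
    exact Submodule.subset_span ⟨S * S', mul_mem hS hS', mulVec_mulVec _ _ _⟩
  | zero => simp
  | add a b _ _ ha hb => simpa [mulVec_add] using add_mem ha hb
  | smul c a _ ha => simpa [mulVec_smul] using Submodule.smul_mem _ c ha

theorem cyclicSpan_le {P : Submodule R (n → R)} (hv : v ∈ P)
    (hP : ∀ S ∈ A, ∀ w ∈ P, S *ᵥ w ∈ P) : cyclicSpan A v ≤ P :=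
  Submodule.span_le.2 fun _ ⟨S, hS, hw⟩ => hw ▸ hP S hS v hv

theorem mulVec_mem_cyclicSpan_adjoin_of_intertwine {ι : Type*} (e : ι → Matrix n n R)
    {s : Set (Matrix n n R)} (hs : ∀ g ∈ s, ∀ j, ∃ k, e j * g = g * e k)
    (hv : ∀ j, e j *ᵥ v ∈ cyclicSpan (Algebra.adjoin R s) v) (j : ι) {w : n → R}
    (hw : w ∈ cyclicSpan (Algebra.adjoin R s) v) :
    e j *ᵥ w ∈ cyclicSpan (Algebra.adjoin R s) v := by
  set P := cyclicSpan (Algebra.adjoin R s) v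
  let U := P ⊓ ⨅ j, P.comap (e j).mulVecLin
  suffices hPU : P ≤ U from (Submodule.mem_iInf _).1 (hPU hw).2 j
  refine cyclicSpan_le ⟨self_mem_cyclicSpan, (Submodule.mem_iInf _).2 hv⟩
    fun _ hS => mulVec_mem_of_mem_adjoin (fun g hg u hu => ?_) hS
  obtain ⟨huP, huE⟩ := Submodule.mem_inf.1 hu
  refine Submodule.mem_inf.2
    ⟨mulVec_mem_cyclicSpan (Algebra.subset_adjoin hg) huP, (Submodule.mem_iInf _).2 fun j => ?_⟩
  obtain ⟨k, hk⟩ := hs g hg j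
  show e j *ᵥ (g *ᵥ u) ∈ P
  rw [mulVec_mulVec, hk, ← mulVec_mulVec]
  exact mulVec_mem_cyclicSpan (Algebra.subset_adjoin hg) ((Submodule.mem_iInf _).1 huE k)

end CyclicSpan

section Graph

variable {X : Type*} [DecidableEq X] (G : SimpleGraph X) (x : X)

theorem Estar_eq_zero {D : ℕ} (hD : ∀ y, G.dist x y ≤ D) {i : ℤ}
    (hi : i ∉ Set.Icc 0 (D : ℤ)) : Estar G x i = 0 := by
  rw [Estar, diagonal_eq_zero]
  funext y
  have := hD y
  rw [if_neg (by simp only [Set.mem_Icc, not_and_or, not_le] at hi; omega)]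
  rfl

variable [Fintype X]

theorem Estar_mul_sum_shift (s : Finset ℕ) (n i : ℤ) (N : Matrix X X ℂ) :
    Estar G x (i + n) * ∑ k ∈ s, Estar G x (k + n) * N * Estar G x k =
      (∑ k ∈ s, Estar G x (k + n) * N * Estar G x k) * Estar G x i := by
  rw [Finset.mul_sum, Finset.sum_mul]
  refine Finset.sum_congr rfl fun k _ => ?_
  rw [← mul_assoc, ← mul_assoc, Estar_mul_Estar, mul_assoc _ _ (Estar G x i), Estar_mul_Estar]
  by_cases h : (k : ℤ) = i
  · simp [h]
  · simp [h, Ne.symm h]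

variable [DecidableRel G.Adj] (D : ℕ)

theorem Estar_mul_lowerM (i : ℤ) :
    Estar G x i * lowerM G x D = lowerM G x D * Estar G x (i + 1) := by
  simpa [lowerM, sub_eq_add_neg] using
    Estar_mul_sum_shift G x (Finset.Icc 1 D) (-1) (i + 1) (adjMat G)

theorem Estar_mul_flatM (i : ℤ) :
    Estar G x i * flatM G x D = flatM G x D * Estar G x i := by
  simpa [flatM] using Estar_mul_sum_shift G x (Finset.range (D + 1)) 0 i (adjMat G)

theorem Estar_mul_raiseM (i : ℤ) :
    Estar G x i * raiseM G x D = raiseM G x D * Estar G x (i - 1) := by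
  simpa [raiseM] using Estar_mul_sum_shift G x (Finset.range D) 1 (i - 1) (adjMat G)

end Graph

section Split

variable {X : Type*} [Fintype X] [DecidableEq X] (G : SimpleGraph X) (x : X)

theorem sum_Estar_mul_mul_Estar_apply (s : Finset ℕ) (n : ℤ) (N : Matrix X X ℂ) (y z : X) :
    (∑ k ∈ s, Estar G x (k + n) * N * Estar G x k) y z =
      if G.dist x z ∈ s ∧ (G.dist x y : ℤ) = G.dist x z + n then N y z else 0 := by
  have hterm : ∀ k : ℕ, (Estar G x (k + n) * N * Estar G x k) y z =
      if G.dist x z = k then (if (G.dist x y : ℤ) = G.dist x z + n then N y z else 0) else 0 := by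
    intro k
    simp only [Estar, mul_diagonal, diagonal_mul]
    split_ifs <;> simp_all
  simp only [Matrix.sum_apply, hterm, Finset.sum_ite_eq, ite_and]

variable [DecidableRel G.Adj]

theorem adjMat_eq_lowerM_add_flatM_add_raiseM {D : ℕ} (hD : ∀ y, G.dist x y ≤ D) :
    adjMat G = lowerM G x D + flatM G x D + raiseM G x D := by
  have hL : lowerM G x D =
      ∑ k ∈ Finset.Icc 1 D, Estar G x (k + -1) * adjMat G * Estar G x k := by
    simp [lowerM, sub_eq_add_neg]
  have hF : flatM G x D =
      ∑ k ∈ Finset.range (D + 1), Estar G x (k + 0) * adjMat G * Estar G x k := by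
    simp [flatM]
  ext y z
  simp only [Matrix.add_apply, hL, hF, raiseM, sum_Estar_mul_mul_Estar_apply]
  by_cases hyz : G.Adj y z
  · have := hD y
    have := hD z
    rcases hyz.diff_dist_adj (u := x) with h | h | h <;>
      simp only [adjMat, of_apply, if_pos hyz, Finset.mem_Icc, Finset.mem_range] <;>
      split_ifs <;> first | omega | norm_num
  · simp [adjMat, hyz]

end Split

section Algebras

variable {X : Type*} [Fintype X] [DecidableEq X] (G : SimpleGraph X) [DecidableRel G.Adj]
  (x : X) (D : ℕ)

theorem Qalg_le_Talg : Qalg G x D ≤ Talg G x D := by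
  have hE : ∀ i : ℤ, 0 ≤ i → i ≤ D → Estar G x i ∈ Talg G x D := fun i h0 hD =>
    Algebra.subset_adjoin (Set.mem_insert_of_mem _ ⟨i, ⟨h0, hD⟩, rfl⟩)
  have hEAE : ∀ a b : ℤ, 0 ≤ a → a ≤ D → 0 ≤ b → b ≤ D →
      Estar G x a * adjMat G * Estar G x b ∈ Talg G x D := fun a b ha ha' hb hb' =>
    mul_mem (mul_mem (hE a ha ha') (Algebra.subset_adjoin (Set.mem_insert _ _))) (hE b hb hb')
  refine Algebra.adjoin_le ?_
  rintro _ (rfl | rfl | rfl) <;> refine Subalgebra.sum_mem _ fun k hk => hEAE _ _ ?_ ?_ ?_ ?_ <;>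
    simp only [Finset.mem_Icc, Finset.mem_range] at hk <;> omega

variable {x D}

theorem mulVec_mem_cyclicSpan_Qalg_of_mem_Talg (hD : ∀ y, G.dist x y ≤ D) {v : X → ℂ}
    (heig : ∀ S ∈ Mstar G x D, ∃ c : ℂ, S *ᵥ v = c • v) {S : Matrix X X ℂ}
    (hS : S ∈ Talg G x D) {w : X → ℂ} (hw : w ∈ cyclicSpan (Qalg G x D) v) :
    S *ᵥ w ∈ cyclicSpan (Qalg G x D) v := by
  have hEv : ∀ j, Estar G x j *ᵥ v ∈ cyclicSpan (Qalg G x D) v := by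
    intro j
    by_cases hj : j ∈ Set.Icc 0 (D : ℤ)
    · obtain ⟨c, hc⟩ := heig _ (Submodule.subset_span ⟨j, hj, rfl⟩)
      rw [hc]
      exact Submodule.smul_mem _ c self_mem_cyclicSpan
    · rw [Estar_eq_zero G x hD hj, zero_mulVec]
      exact zero_mem _
  have hE : ∀ j {w}, w ∈ cyclicSpan (Qalg G x D) v →
      Estar G x j *ᵥ w ∈ cyclicSpan (Qalg G x D) v :=
    mulVec_mem_cyclicSpan_adjoin_of_intertwine (Estar G x)
      (s := {lowerM G x D, flatM G x D, raiseM G x D})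
      (by rintro _ (rfl | rfl | rfl) j
          exacts [⟨_, Estar_mul_lowerM G x D j⟩, ⟨_, Estar_mul_flatM G x D j⟩,
            ⟨_, Estar_mul_raiseM G x D j⟩]) hEv
  refine mulVec_mem_of_mem_adjoin ?_ hS w hw
  rintro _ (rfl | ⟨j, -, rfl⟩) u hu
  · rw [adjMat_eq_lowerM_add_flatM_add_raiseM G x hD, add_mulVec, add_mulVec]
    refine add_mem (add_mem ?_ ?_) ?_ <;>
      exact mulVec_mem_cyclicSpan (Algebra.subset_adjoin (by simp)) hu
  · exact hE j hu

end Algebras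

theorem stmt12_general {X : Type*} [Fintype X] [DecidableEq X]
    (G : SimpleGraph X) [DecidableRel G.Adj] (x : X) (D : ℕ)
    (hD : ∀ y, G.dist x y ≤ D)
    (W : Submodule ℂ (X → ℂ)) (hW : IsIrredMod (Talg G x D) W)
    (v : X → ℂ) (hv : v ∈ W) (hv0 : v ≠ 0)
    (heig : ∀ S ∈ Mstar G x D, ∃ c : ℂ, Matrix.mulVec S v = c • v) :
    W = Submodule.span ℂ {w | ∃ S ∈ Qalg G x D, w = Matrix.mulVec S v} := by
  obtain ⟨hWT, -, hirr⟩ := hW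
  have hQW : cyclicSpan (Qalg G x D) v ≤ W :=
    cyclicSpan_le hv fun S hS => hWT S (Qalg_le_Talg G x D hS)
  rcases hirr _ hQW fun S hS w hw => mulVec_mem_cyclicSpan_Qalg_of_mem_Talg G hD heig hS hw
    with h | h
  · exact absurd ((Submodule.mem_bot ℂ).1 (h ▸ self_mem_cyclicSpan)) hv0
  · exact h.symm

theorem stmt12 {X : Type*} [Fintype X] [DecidableEq X]
    (G : SimpleGraph X) [DecidableRel G.Adj] (hG : G.Connected) (x : X) (D : ℕ)
    (hD : ∀ y, G.dist x y ≤ D) (hD2 : ∃ y, G.dist x y = D)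
    (W : Submodule ℂ (X → ℂ)) (hW : IsIrredMod (Talg G x D) W)
    (v : X → ℂ) (hv : v ∈ W) (hv0 : v ≠ 0)
    (heig : ∀ S ∈ Mstar G x D, ∃ c : ℂ, Matrix.mulVec S v = c • v) :
    W = Submodule.span ℂ {w | ∃ S ∈ Qalg G x D, w = Matrix.mulVec S v} :=
  stmt12_general G x D hD W hW v hv hv0 heig
end
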